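/- Let (ρ₁,u₁,ρ₅,u₅,ρ₆,u₆) be a germ solution of the call-center system with ρ₆ > 0, and suppose the lexicographic minimum in equation (c) is attained by its second argument, i.e. (π_ur·ρ₁, π_ur·(u₁ − ρ₁·τ_ur)) ≤lex (ρ₆, N₂ − ρ₅·(τ_tr + τ_ext') + u₆ − ρ₆·τ_ur'). Then ρ₆ = π_ur·N₁/τ̄ and N₂/N₁ ≥ r₂; moreover, if this lexicographic inequality is strict, then N₂/N₁ > r₂. -/

import Mathlib

/-! Since `ρ₆ > 0`, equation (b) forces `(ρ₅, u₅) = π_ext·(ρ₁, u₁ − ρ₁τ_ext)`, and substituting this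
into (a) collapses it to `ρ₁·τ̄ = N₁`. The hypothesis makes the lexicographic minimum in (c) equal to
its second argument, so `(ρ₆, u₆) = π_ur·(ρ₁, u₁ − ρ₁τ_ur)`. The two compared pairs then share their
first coordinate, and the difference of their second coordinates is
`N₂ − ρ₁·(π_ext(τ_tr + τ_ext') + π_ur τ_ur') = N₂ − N₁·r₂`. -/

/-- Lexicographic order on `ℝ × ℝ`. -/
def lexLe (p q : ℝ × ℝ) : Prop := p.1 < q.1 ∨ (p.1 = q.1 ∧ p.2 ≤ q.2)

/-- Strict lexicographic order on `ℝ × ℝ`. -/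
def lexLt (p q : ℝ × ℝ) : Prop := lexLe p q ∧ p ≠ q

/-- Lexicographic minimum on `ℝ × ℝ`. -/
noncomputable def lexMin (p q : ℝ × ℝ) : ℝ × ℝ :=
  if p.1 < q.1 ∨ (p.1 = q.1 ∧ p.2 ≤ q.2) then p else q

/-- Parameters of the emergency call center: routing proportions `pe, pu, pa`
(for extremely urgent, urgent, and advice calls), holding times
`te, tu, ta, ttr, te', tu'`, and staffing levels `N1, N2`. -/
structure CCParams where
  pe : ℝ
  pu : ℝ
  pa : ℝ
  te : ℝ
  tu : ℝ
  ta : ℝ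
  ttr : ℝ
  te' : ℝ
  tu' : ℝ
  N1 : ℝ
  N2 : ℝ
  hpe : 0 < pe
  hpu : 0 < pu
  hpa : 0 < pa
  hsum : pe + pu + pa = 1
  hte : 0 < te
  htu : 0 < tu
  hta : 0 < ta
  httr : 0 < ttr
  hte' : 0 < te'
  htu' : 0 < tu'
  hN1 : 0 < N1
  hN2 : 0 < N2

/-- Average treatment time at level 1. -/
noncomputable def CCParams.tbar (P : CCParams) : ℝ :=
  P.pe * (P.te + P.ttr) + P.pu * P.tu + P.pa * P.ta

/-- First phase transition point. -/
noncomputable def CCParams.r1 (P : CCParams) : ℝ := P.pe * (P.ttr + P.te') / P.tbar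

/-- Second phase transition point. -/
noncomputable def CCParams.r2 (P : CCParams) : ℝ :=
  (P.pe * (P.ttr + P.te') + P.pu * P.tu') / P.tbar

/-- A germ solution of the call-center system. -/
noncomputable def CCParams.GermSol (P : CCParams) (ρ1 u1 ρ5 u5 ρ6 u6 : ℝ) : Prop :=
  0 ≤ ρ1 ∧ 0 ≤ ρ5 ∧ 0 ≤ ρ6 ∧
  -- (a)
  (ρ1, u1) = (ρ5 + P.pu * ρ1 + P.pa * ρ1,
    P.N1 + (u5 - ρ5 * P.ttr) + P.pu * (u1 - ρ1 * P.tu) + P.pa * (u1 - ρ1 * P.ta)) ∧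
  -- (b), case ρ6 = 0
  (ρ6 = 0 → (ρ5, u5) = lexMin (ρ5, P.N2 + u5 - ρ5 * (P.ttr + P.te'))
      (P.pe * ρ1, P.pe * (u1 - ρ1 * P.te))) ∧
  -- (b), case ρ6 > 0
  (0 < ρ6 → (ρ5, u5) = (P.pe * ρ1, P.pe * (u1 - ρ1 * P.te))) ∧
  -- (c)
  (ρ6, u6) = lexMin (ρ6, P.N2 - ρ5 * (P.ttr + P.te') + u6 - ρ6 * P.tu')
      (P.pu * ρ1, P.pu * (u1 - ρ1 * P.tu))

/-- The δ-discretized call-center equations at time `t`. -/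
noncomputable def CCParams.Eqns (P : CCParams) (z1 z5 z6 : ℝ → ℝ) (δ t : ℝ) : Prop :=
  z1 t = P.N1 + z5 (t - P.ttr) + P.pu * z1 (t - P.tu) + P.pa * z1 (t - P.ta) ∧
  z5 t = min (P.N2 + z5 (t - P.ttr - P.te') + z6 (t - P.tu') - z6 (t - δ))
      (P.pe * z1 (t - P.te)) ∧
  z6 t = min (P.N2 + z5 (t - P.ttr - P.te') + z6 (t - P.tu') - z5 t)
      (P.pu * z1 (t - P.tu))

theorem lexLe_iff_toLex_le (p q : ℝ × ℝ) : lexLe p q ↔ toLex p ≤ toLex q :=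
  Prod.Lex.le_iff.symm

theorem lexMin_eq_right_of_lexLe {p q : ℝ × ℝ} (h : lexLe q p) : lexMin p q = q := by
  unfold lexMin
  split_ifs with hpq
  · exact toLex.injective <|
      le_antisymm ((lexLe_iff_toLex_le p q).1 hpq) ((lexLe_iff_toLex_le q p).1 h)
  · rfl

theorem lexLe_iff_of_fst_eq {p q : ℝ × ℝ} (h : p.1 = q.1) : lexLe p q ↔ p.2 ≤ q.2 := by
  simp [lexLe, h]

theorem lexLt_iff_of_fst_eq {p q : ℝ × ℝ} (h : p.1 = q.1) : lexLt p q ↔ p.2 < q.2 := by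
  rw [lexLt, lexLe_iff_of_fst_eq h, lt_iff_le_and_ne, Ne, Prod.ext_iff, Ne]
  simp [h]

namespace CCParams

theorem tbar_pos (P : CCParams) : 0 < P.tbar := by
  have := P.hpe; have := P.hpu; have := P.hpa
  have := P.hte; have := P.htu; have := P.hta; have := P.httr
  unfold tbar
  positivity

theorem r2_le_div_iff (P : CCParams) {ρ1 : ℝ} (hρ1 : ρ1 * P.tbar = P.N1) :
    P.r2 ≤ P.N2 / P.N1 ↔ ρ1 * (P.pe * (P.ttr + P.te') + P.pu * P.tu') ≤ P.N2 := by
  rw [r2, div_le_div_iff₀ P.tbar_pos P.hN1, ← hρ1, ← mul_assoc, mul_comm _ ρ1,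
    mul_le_mul_iff_left₀ P.tbar_pos]

theorem r2_lt_div_iff (P : CCParams) {ρ1 : ℝ} (hρ1 : ρ1 * P.tbar = P.N1) :
    P.r2 < P.N2 / P.N1 ↔ ρ1 * (P.pe * (P.ttr + P.te') + P.pu * P.tu') < P.N2 := by
  rw [r2, div_lt_div_iff₀ P.tbar_pos P.hN1, ← hρ1, ← mul_assoc, mul_comm _ ρ1,
    mul_lt_mul_iff_left₀ P.tbar_pos]

namespace GermSol

variable {P : CCParams} {ρ1 u1 ρ5 u5 ρ6 u6 : ℝ}

theorem rho5_u5_eq_of_pos (hsol : P.GermSol ρ1 u1 ρ5 u5 ρ6 u6) (hρ6 : 0 < ρ6) :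
    ρ5 = P.pe * ρ1 ∧ u5 = P.pe * (u1 - ρ1 * P.te) :=
  Prod.mk.inj (hsol.2.2.2.2.2.1 hρ6)

theorem rho1_mul_tbar_of_pos (hsol : P.GermSol ρ1 u1 ρ5 u5 ρ6 u6) (hρ6 : 0 < ρ6) :
    ρ1 * P.tbar = P.N1 := by
  obtain ⟨hρ5, hu5⟩ := hsol.rho5_u5_eq_of_pos hρ6
  have hu1 := (Prod.mk.inj hsol.2.2.2.1).2
  rw [hρ5, hu5] at hu1
  unfold tbar
  linear_combination hu1 + u1 * P.hsum

theorem rho6_u6_eq_of_lexLe (hsol : P.GermSol ρ1 u1 ρ5 u5 ρ6 u6)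
    (hmin : lexLe (P.pu * ρ1, P.pu * (u1 - ρ1 * P.tu))
      (ρ6, P.N2 - ρ5 * (P.ttr + P.te') + u6 - ρ6 * P.tu')) :
    ρ6 = P.pu * ρ1 ∧ u6 = P.pu * (u1 - ρ1 * P.tu) :=
  Prod.mk.inj (hsol.2.2.2.2.2.2.trans (lexMin_eq_right_of_lexLe hmin))

end GermSol

end CCParams

/-- in a germ solution with `ρ₆ > 0` in which the lexicographic minimum in
equation (c) is attained by its second argument, we have `ρ₆ = π_ur·N₁/τ̄` and
`N₂/N₁ ≥ r₂`; if the lexicographic inequality is strict, then `N₂/N₁ > r₂`. -/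
theorem germ_phase_high (P : CCParams) (ρ1 u1 ρ5 u5 ρ6 u6 : ℝ)
    (hsol : P.GermSol ρ1 u1 ρ5 u5 ρ6 u6) (hρ6 : 0 < ρ6)
    (hmin : lexLe (P.pu * ρ1, P.pu * (u1 - ρ1 * P.tu))
      (ρ6, P.N2 - ρ5 * (P.ttr + P.te') + u6 - ρ6 * P.tu')) :
    (ρ6 = P.pu * P.N1 / P.tbar ∧ P.N2 / P.N1 ≥ P.r2) ∧
    (lexLt (P.pu * ρ1, P.pu * (u1 - ρ1 * P.tu))
        (ρ6, P.N2 - ρ5 * (P.ttr + P.te') + u6 - ρ6 * P.tu') →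
      P.N2 / P.N1 > P.r2) := by
  have hρ1 := hsol.rho1_mul_tbar_of_pos hρ6
  have hρ5 := (hsol.rho5_u5_eq_of_pos hρ6).1
  obtain ⟨hρ6u, hu6⟩ := hsol.rho6_u6_eq_of_lexLe hmin
  have hslack : P.N2 - ρ5 * (P.ttr + P.te') + u6 - ρ6 * P.tu' =
      P.pu * (u1 - ρ1 * P.tu) + (P.N2 - ρ1 * (P.pe * (P.ttr + P.te') + P.pu * P.tu')) := by
    rw [hρ5, hu6, hρ6u]; ring
  have hfst := hρ6u.symm
  rw [lexLe_iff_of_fst_eq hfst] at hmin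
  rw [lexLt_iff_of_fst_eq hfst]
  dsimp only at hmin ⊢
  rw [hslack] at hmin ⊢
  refine ⟨⟨?_, (P.r2_le_div_iff hρ1).2 (by linarith)⟩,
    fun hlt => (P.r2_lt_div_iff hρ1).2 (by linarith)⟩
  rw [hρ6u, ← hρ1, mul_div_assoc, mul_div_cancel_right₀ _ P.tbar_pos.ne']
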